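/- There do not exist six admissible subsets M_1, …, M_6 of X such that every pairwise intersection |M_α ∩ M_β| (1 ≤ α < β ≤ 6) has odd cardinality at most 3 and no element of X belongs to four or more of the six sets. -/

import Mathlib

/-!
An admissible set has exactly half of the 14 points, so the six sets have total size
42 = 3 · 14; as no point lies in more than three of them, every point lies in exactly three.
Counting the triples (α < β, x ∈ M α ∩ M β) by their point then gives
∑_{α<β} |M α ∩ M β| = 14 · C(3, 2) = 42, an even number, whereas it is a sum of C(6, 2) = 15
odd numbers.
-/

open Finset

namespace Finset

variable {ι X : Type*}

theorem card_filter_fst_lt_snd_product_self [LinearOrder ι] (s : Finset ι) :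
    #{p ∈ s ×ˢ s | p.1 < p.2} = (#s).choose 2 := by
  have hswap : #{p ∈ s ×ˢ s | p.2 < p.1} = #{p ∈ s ×ˢ s | p.1 < p.2} := by
    refine card_bij (fun p _ => p.swap) ?_ (fun _ _ _ _ h => Prod.swap_injective h) ?_
    · simp +contextual
    · intro p hp
      exact ⟨p.swap, by simpa [and_comm] using hp, rfl⟩
  have hsplit : s.offDiag = {p ∈ s ×ˢ s | p.1 < p.2} ∪ {p ∈ s ×ˢ s | p.2 < p.1} := by
    ext p
    simp only [mem_offDiag, mem_union, mem_filter, mem_product, ne_iff_lt_or_gt]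
    tauto
  have hdisj : Disjoint {p ∈ s ×ˢ s | p.1 < p.2} {p ∈ s ×ˢ s | p.2 < p.1} :=
    disjoint_filter.2 fun _ _ h => h.asymm
  have h := offDiag_card s
  rw [hsplit, card_union_of_disjoint hdisj, hswap] at h
  rw [Nat.choose_two_right, Nat.mul_sub_left_distrib, mul_one, ← h]
  omega

variable [Fintype ι] [Fintype X] [DecidableEq X]

theorem two_mul_card_eq_of_mem_iff_not_mem {σ : X → X}
    (hσ : Function.Involutive σ) {s : Finset X} (hs : ∀ x, x ∈ s ↔ σ x ∉ s) :
    2 * #s = Fintype.card X := by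
  have himage : s.image σ = sᶜ := by
    ext y
    simp only [mem_image, mem_compl]
    constructor
    · rintro ⟨x, hx, rfl⟩
      exact (hs x).1 hx
    · exact fun hy => ⟨σ y, (hs (σ y)).2 (by rwa [hσ y]), hσ y⟩
  rw [← card_add_card_compl s, ← himage, card_image_of_injective s hσ.injective, two_mul]

def memCount (M : ι → Finset X) (x : X) : ℕ := #{i | x ∈ M i}

theorem sum_card_eq_sum_memCount (M : ι → Finset X) : ∑ i, #(M i) = ∑ x, memCount M x := by
  simpa [bipartiteAbove, bipartiteBelow, memCount, filter_mem_eq_inter] using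
    sum_card_bipartiteAbove_eq_sum_card_bipartiteBelow (s := univ) (t := univ)
      (fun i x => x ∈ M i)

theorem sum_card_inter_eq_sum_choose_memCount [LinearOrder ι] (M : ι → Finset X) :
    ∑ p : ι × ι with p.1 < p.2, #(M p.1 ∩ M p.2) = ∑ x, (memCount M x).choose 2 := by
  have hcount := sum_card_bipartiteAbove_eq_sum_card_bipartiteBelow
    (s := {p : ι × ι | p.1 < p.2}) (t := univ) (fun p x => x ∈ M p.1 ∩ M p.2)
  simp only [bipartiteAbove, bipartiteBelow, filter_mem_eq_inter, univ_inter] at hcount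
  rw [hcount]
  refine sum_congr rfl fun x _ => ?_
  rw [memCount, ← card_filter_fst_lt_snd_product_self]
  congr 1
  ext p
  simp only [mem_filter, mem_univ, true_and, mem_product, mem_inter]
  tauto

theorem memCount_eq_of_le {M : ι → Finset X} {m k : ℕ} (hcard : ∀ i, #(M i) = m)
    (hle : ∀ x, memCount M x ≤ k) (htotal : Fintype.card ι * m = Fintype.card X * k) (x : X) :
    memCount M x = k := by
  have hsum : ∑ x, memCount M x = ∑ _x : X, k := by
    simp [← sum_card_eq_sum_memCount, hcard, htotal]
  exact (sum_eq_sum_iff_of_le fun x _ => hle x).1 hsum x (mem_univ x)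

end Finset

theorem fourteen_dim_no_six_spinors_general {X : Type*} [Fintype X] [DecidableEq X]
    (hX : Fintype.card X = 14)
    (σ : X → X) (hσinv : ∀ x, σ (σ x) = x) :
    ¬ ∃ M : Fin 6 → Finset X,
      (∀ α, ∀ x : X, x ∈ M α ↔ σ x ∉ M α) ∧
      (∀ α β : Fin 6, α < β → Odd (M α ∩ M β).card ∧ (M α ∩ M β).card ≤ 3) ∧
      (∀ x : X, (univ.filter (fun α : Fin 6 => x ∈ M α)).card ≤ 3) := by
  rintro ⟨M, hadm, hpair, hcov⟩
  have hcard (α : Fin 6) : #(M α) = 7 := by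
    have := two_mul_card_eq_of_mem_iff_not_mem hσinv (hadm α)
    omega
  have hcount : ∀ x, memCount M x = 3 := memCount_eq_of_le hcard hcov (by simp [hX])
  have hodd : Odd (∑ p : Fin 6 × Fin 6 with p.1 < p.2, #(M p.1 ∩ M p.2)) := by
    rw [odd_sum_iff_odd_card_odd,
      filter_true_of_mem fun p hp => (hpair p.1 p.2 (mem_filter.1 hp).2).1]
    decide
  simp only [sum_card_inter_eq_sum_choose_memCount, hcount, sum_const, card_univ, hX] at hodd
  exact absurd hodd (by decide)

/-- In dimension fourteen (`|X| = 14`, `d = 7`): there do not exist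
six admissible subsets such that every pairwise intersection has odd cardinality at
most 3 and no element of `X` belongs to four or more of the six sets. -/
theorem fourteen_dim_no_six_spinors {X : Type*} [Fintype X] [DecidableEq X]
    (hX : Fintype.card X = 14)
    (σ : X → X) (hσinv : ∀ x, σ (σ x) = x) (hσfpf : ∀ x, σ x ≠ x) :
    ¬ ∃ M : Fin 6 → Finset X,
      (∀ α, ∀ x : X, x ∈ M α ↔ σ x ∉ M α) ∧
      (∀ α β : Fin 6, α < β → Odd (M α ∩ M β).card ∧ (M α ∩ M β).card ≤ 3) ∧
      (∀ x : X, (univ.filter (fun α : Fin 6 => x ∈ M α)).card ≤ 3) :=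
  fourteen_dim_no_six_spinors_general hX σ hσinv
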